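/- Let {A_1,...,A_m} be a bimodal collection of disjoint subsets of an abelian group G with internal difference groups H_i, where |A_1| < |H_1| and |A_i| = |H_i| for all 2 ≤ i ≤ m (so each A_i, i ≥ 2, is a full coset of H_i). Then for every i with 2 ≤ i ≤ m, H_i is a subgroup of H_1. -/

import Mathlib

variable {G : Type*} [AddCommGroup G] [Fintype G]

/-- `N A i δ` counts the pairs `(a, b)` with `a ∈ A i`, `b ∈ A j` for some `j ≠ i`,
and `a - b = δ`. -/
noncomputable def bimodalCount {ι : Type*} (A : ι → Set G) (i : ι) (δ : G) : ℕ :=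
  {p : G × G | p.1 ∈ A i ∧ (∃ j, j ≠ i ∧ p.2 ∈ A j) ∧ p.1 - p.2 = δ}.ncard

/-- A collection of subsets has the bimodal property if every nonzero `δ` occurs as
an external difference out of `A i` either `0` or `|A i|` times. -/
def IsBimodal {ι : Type*} (A : ι → Set G) : Prop :=
  ∀ δ : G, δ ≠ 0 → ∀ i : ι,
    bimodalCount A i δ = 0 ∨ bimodalCount A i δ = (A i).ncard

/-- The internal difference group of a subset `X`: the subgroup generated by all
differences of elements of `X`. -/
def idg (X : Set G) : AddSubgroup G :=
  AddSubgroup.closure {d : G | ∃ x ∈ X, ∃ y ∈ X, x - y = d}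

/-!
Bimodality makes `B i = ⋃_{j ≠ i} A j` invariant under translation by `H i = idg (A i)`.
For `i ≠ 0` the set `A i` is an `H i`-coset, so `H i` also stabilizes
`A i ∪ B i = ⋃ j, A j`, which is `A 0 ∪ B 0`. If `h ∈ H i \ H 0` and `a ∈ A 0`, then
`a + h ∉ A 0`, so `a + h ∈ B 0`. As `B 0` is `H 0`-stable and `A 0 ∪ B 0` is `h`-stable,
every `a + g` with `g ∈ H 0` lies in `A 0 ∪ B 0` but not in `B 0`. Hence `a + H 0 ⊆ A 0`,
contradicting `|A 0| < |H 0|`.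
-/

open Pointwise AddAction

omit [Fintype G] in
lemma sub_mem_idg {X : Set G} {x y : G} (hx : x ∈ X) (hy : y ∈ X) : x - y ∈ idg X :=
  AddSubgroup.subset_closure ⟨x, hx, y, hy, rfl⟩

omit [Fintype G] in
lemma subset_vadd_idg {X : Set G} {c : G} (hc : c ∈ X) : X ⊆ c +ᵥ (idg X : Set G) :=
  fun x hx => ⟨x - c, sub_mem_idg hx hc, add_sub_cancel c x⟩

omit [Fintype G] in
lemma ncard_vadd_idg (X : Set G) (c : G) : (c +ᵥ (idg X : Set G)).ncard = Nat.card (idg X) := by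
  rw [Set.ncard_vadd_set]
  exact Nat.card_coe_set_eq _

/-- The set `B i` of the paper, which is `(⋃ j, A j) \ A i` when the `A j` are disjoint. -/
def unionOthers {ι : Type*} (A : ι → Set G) (i : ι) : Set G :=
  {b | ∃ j, j ≠ i ∧ b ∈ A j}

section unionOthers

variable {ι : Type*} {A : ι → Set G}

omit [AddCommGroup G] [Fintype G] in
lemma union_unionOthers (i : ι) : A i ∪ unionOthers A i = ⋃ j, A j := by
  ext b
  simp only [unionOthers, Set.mem_union, Set.mem_ofPred_eq, Set.mem_iUnion]
  constructor
  · rintro (hb | ⟨j, -, hb⟩)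
    exacts [⟨i, hb⟩, ⟨j, hb⟩]
  · rintro ⟨j, hb⟩
    rcases eq_or_ne j i with rfl | hji
    exacts [Or.inl hb, Or.inr ⟨j, hji, hb⟩]

omit [AddCommGroup G] [Fintype G] in
lemma disjoint_unionOthers (hdisj : ∀ i j, i ≠ j → Disjoint (A i) (A j)) (i : ι) :
    Disjoint (A i) (unionOthers A i) := by
  rw [Set.disjoint_right]
  rintro b ⟨j, hji, hbj⟩ hbi
  exact (hdisj i j hji.symm).ne_of_mem hbi hbj rfl

omit [Fintype G] in
lemma bimodalCount_eq_ncard (i : ι) (δ : G) :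
    bimodalCount A i δ = {x | x ∈ A i ∧ x - δ ∈ unionOthers A i}.ncard := by
  have hpairs : {p : G × G | p.1 ∈ A i ∧ (∃ j, j ≠ i ∧ p.2 ∈ A j) ∧ p.1 - p.2 = δ} =
      (fun x => (x, x - δ)) '' {x | x ∈ A i ∧ x - δ ∈ unionOthers A i} := by
    ext ⟨x, y⟩
    simp only [unionOthers, Set.mem_ofPred_eq, Set.mem_image, Prod.mk.injEq]
    constructor
    · rintro ⟨hx, hy, rfl⟩
      exact ⟨x, ⟨hx, by rwa [sub_sub_cancel]⟩, rfl, sub_sub_cancel x y⟩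
    · rintro ⟨x, ⟨hx, hy⟩, rfl, rfl⟩
      exact ⟨hx, hy, sub_sub_cancel x δ⟩
  rw [bimodalCount, hpairs, Set.ncard_image_of_injective _ fun x y h => congrArg Prod.fst h]

lemma IsBimodal.sub_mem_unionOthers (hbim : IsBimodal A) {i : ι} {δ x y : G} (hδ : δ ≠ 0)
    (hy : y ∈ A i) (hyδ : y - δ ∈ unionOthers A i) (hx : x ∈ A i) :
    x - δ ∈ unionOthers A i := by
  set T := {z | z ∈ A i ∧ z - δ ∈ unionOthers A i}
  have hT : T = A i := by
    refine Set.eq_of_subset_of_ncard_le (fun z hz => hz.1) ?_ (Set.toFinite _)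
    rcases hbim δ hδ i with h | h <;> rw [bimodalCount_eq_ncard] at h
    · exact absurd h (Set.ncard_ne_zero_of_mem (⟨hy, hyδ⟩ : y ∈ T))
    · exact h.ge
  exact (hT ▸ hx : x ∈ T).2

lemma IsBimodal.idg_le_stabilizer_unionOthers (hbim : IsBimodal A)
    (hdisj : ∀ i j, i ≠ j → Disjoint (A i) (A j)) (i : ι) :
    idg (A i) ≤ stabilizer G (unionOthers A i) := by
  rw [idg, AddSubgroup.closure_le]
  rintro _ ⟨x, hx, y, hy, rfl⟩
  rw [SetLike.mem_coe, mem_stabilizer_set' (Set.toFinite _)]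
  intro b hb
  have hyb : y - b ≠ 0 := sub_ne_zero.2 fun hyb =>
    Set.disjoint_left.1 (disjoint_unionOthers hdisj i) hy (hyb ▸ hb)
  have := hbim.sub_mem_unionOthers hyb hy (by rwa [sub_sub_cancel]) hx
  rwa [vadd_eq_add, show x - y + b = x - (y - b) by abel]

end unionOthers

lemma idg_le_stabilizer_of_ncard_eq {X : Set G} (hX : X.Nonempty)
    (hcard : X.ncard = Nat.card (idg X)) : idg X ≤ stabilizer G X := by
  obtain ⟨c, hc⟩ := hX
  have hcoset : X = c +ᵥ (idg X : Set G) := by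
    refine Set.eq_of_subset_of_ncard_le (subset_vadd_idg hc) ?_ (Set.toFinite _)
    rw [ncard_vadd_idg, hcard]
  conv_rhs => rw [hcoset, stabilizer_vadd_eq_right, stabilizer_addSubgroup]

omit [Fintype G] in
lemma vadd_coe_subset_of_add_mem {H : AddSubgroup G} {A B : Set G} (hAB : Disjoint A B)
    (hB : H ≤ stabilizer G B) {h a : G} (hh : h ∈ stabilizer G (A ∪ B)) (ha : a ∈ A)
    (hah : a + h ∈ B) : a +ᵥ (H : Set G) ⊆ A := by
  rintro _ ⟨g, hg, rfl⟩
  have hgah : g + (a + h) ∈ B := (mem_stabilizer_set.1 (hB hg) _).2 hah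
  have hag : a + g ∈ A ∪ B := by
    refine (mem_stabilizer_set.1 hh _).1 (Or.inr ?_)
    rwa [vadd_eq_add, show h + (a + g) = g + (a + h) by abel]
  refine hag.resolve_right fun hagB => Set.disjoint_left.1 hAB ha ?_
  have := (mem_stabilizer_set.1 (hB (neg_mem hg)) _).2 hagB
  rwa [vadd_eq_add, show -g + (a + g) = a by abel] at this

theorem bimodal_r_one_idg_le_general {m : ℕ} (A : Fin (m + 1) → Set G)
    (hne : ∀ i, (A i).Nonempty)
    (hdisj : ∀ i j, i ≠ j → Disjoint (A i) (A j))
    (hbim : IsBimodal A)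
    (h0 : (A 0).ncard < Nat.card (idg (A 0)))
    (hfull : ∀ i : Fin (m + 1), i ≠ 0 → (A i).ncard = Nat.card (idg (A i))) :
    ∀ i : Fin (m + 1), i ≠ 0 → idg (A i) ≤ idg (A 0) := by
  intro i hi h hh
  by_contra hh0
  obtain ⟨a, ha⟩ := hne 0
  have hS : h ∈ stabilizer G (A 0 ∪ unionOthers A 0) := by
    rw [union_unionOthers, ← union_unionOthers i]
    exact stabilizer_inf_stabilizer_le_stabilizer_union
      ⟨idg_le_stabilizer_of_ncard_eq (hne i) (hfull i hi) hh,
        hbim.idg_le_stabilizer_unionOthers hdisj i hh⟩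
  have hah : a + h ∈ unionOthers A 0 := by
    have hahS : a + h ∈ A 0 ∪ unionOthers A 0 := by
      rw [add_comm a h]
      exact (mem_stabilizer_set.1 hS a).2 (Or.inl ha)
    refine hahS.resolve_left fun hah => hh0 ?_
    simpa using sub_mem_idg hah ha
  have hcoset := vadd_coe_subset_of_add_mem (disjoint_unionOthers hdisj 0)
    (hbim.idg_le_stabilizer_unionOthers hdisj 0) hS ha hah
  refine h0.not_ge ?_
  calc Nat.card (idg (A 0)) = (a +ᵥ (idg (A 0) : Set G)).ncard := (ncard_vadd_idg _ a).symm
    _ ≤ (A 0).ncard := Set.ncard_le_ncard hcoset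

/-- If `A 0` is the unique set not filling a coset of its internal
difference group and all the others are full cosets, then `H i ≤ H 0` for `i ≠ 0`. -/
theorem bimodal_r_one_idg_le {m : ℕ} (hm : 1 ≤ m) (A : Fin (m + 1) → Set G)
    (hne : ∀ i, (A i).Nonempty)
    (hdisj : ∀ i j, i ≠ j → Disjoint (A i) (A j))
    (hbim : IsBimodal A)
    (h0 : (A 0).ncard < Nat.card (idg (A 0)))
    (hfull : ∀ i : Fin (m + 1), i ≠ 0 → (A i).ncard = Nat.card (idg (A i))) :
    ∀ i : Fin (m + 1), i ≠ 0 → idg (A i) ≤ idg (A 0) :=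
  bimodal_r_one_idg_le_general A hne hdisj hbim h0 hfull
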